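/- arXiv:1406.7105 — 5 statements merged into one kernel-verified Lean document; each statement's English description precedes it below -/
import Mathlib

section
/- Let π be the bivector field on ℝ⁴ with coordinates (x₁,y₁,x₂,y₂) defined by π = (x₂²+y₂²) ∂x₁∧∂y₁ + (x₁²+y₁²) ∂x₂∧∂y₂ + (-y₁y₂-x₁x₂) ∂x₁∧∂y₂ + (x₁x₂+y₁y₂) ∂y₁∧∂x₂ + (-x₁y₂+y₁x₂) ∂y₁∧∂y₂ + (-x₁y₂+y₁x₂) ∂x₁∧∂x₂. Then π satisfies the Jacobi identity, i.e. for all i,j,l: Σₛ (π^{sl} ∂ₛπ^{ij} + π^{si} ∂ₛπ^{jl} + π^{sj} ∂ₛπ^{li}) = 0, where π^{ij} are the coefficient functions of π. -/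
/-!
The coordinate Jacobiator of an antisymmetric bivector is totally antisymmetric in `i, j, l`,
so on ℝ⁴ it vanishes as soon as its four components with `i < j < l` do; those are checked by
differentiating the quadratic coefficients of `lefPi` and normalizing.
-/

/-- Partial derivative of `f : ℝ⁴ → ℝ` in the `s`-th coordinate direction at `q`. -/
noncomputable def pd (s : Fin 4) (f : (Fin 4 → ℝ) → ℝ) (q : Fin 4 → ℝ) : ℝ :=
  fderiv ℝ f q (Pi.single s 1)

/-- The Lefschetz-model bivector on ℝ⁴ with coordinates (x₁,y₁,x₂,y₂) = (q 0, q 1, q 2, q 3),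
as an antisymmetric matrix of coefficient functions. -/
noncomputable def lefPi (q : Fin 4 → ℝ) : Matrix (Fin 4) (Fin 4) ℝ :=
  !![0,                      q 2 ^ 2 + q 3 ^ 2,      -(q 0) * q 3 + q 1 * q 2, -(q 1) * q 3 - q 0 * q 2;
     -(q 2 ^ 2 + q 3 ^ 2),   0,                      q 0 * q 2 + q 1 * q 3,    -(q 0) * q 3 + q 1 * q 2;
     q 0 * q 3 - q 1 * q 2,  -(q 0 * q 2 + q 1 * q 3), 0,                      q 0 ^ 2 + q 1 ^ 2;
     q 1 * q 3 + q 0 * q 2,  q 0 * q 3 - q 1 * q 2,   -(q 0 ^ 2 + q 1 ^ 2),    0]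

lemma eq_zero_of_alternating_fin_four {M : Type*} [AddCommGroup M] {T : Fin 4 → Fin 4 → Fin 4 → M}
    (hcycle : ∀ i j l, T j l i = T i j l) (hswap : ∀ i j l, T j i l = -T i j l)
    (hdiag : ∀ i l, T i i l = 0)
    (h012 : T 0 1 2 = 0) (h013 : T 0 1 3 = 0) (h023 : T 0 2 3 = 0) (h123 : T 1 2 3 = 0)
    (i j l : Fin 4) : T i j l = 0 := by
  have hdiag₂ : ∀ i j, T i j j = 0 := fun i j => by rw [← hcycle, hdiag]
  have hdiag₃ : ∀ i j, T i j i = 0 := fun i j => by rw [hcycle, hdiag]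
  -- a triple of distinct indices is a rotation of an increasing one, possibly after a swap
  fin_cases i <;> fin_cases j <;> fin_cases l <;> first
    | exact hdiag _ _ | exact hdiag₂ _ _ | exact hdiag₃ _ _
    | assumption | (rw [hcycle]; assumption) | (rw [hcycle, hcycle]; assumption)
    | (rw [hswap, neg_eq_zero]
       first | assumption | (rw [hcycle]; assumption) | (rw [hcycle, hcycle]; assumption))

section PartialDerivative

variable {f g : (Fin 4 → ℝ) → ℝ} {q : Fin 4 → ℝ} (s : Fin 4)

lemma pd_apply_coord (i : Fin 4) : pd s (fun x => x i) q = if i = s then 1 else 0 := by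
  simp [pd, fderiv_apply, Pi.single_apply]

lemma pd_neg : pd s (fun x => -f x) q = -pd s f q := by
  simp [pd]

lemma pd_add (hf : DifferentiableAt ℝ f q) (hg : DifferentiableAt ℝ g q) :
    pd s (fun x => f x + g x) q = pd s f q + pd s g q := by
  simp [pd, fderiv_fun_add hf hg]

lemma pd_sub (hf : DifferentiableAt ℝ f q) (hg : DifferentiableAt ℝ g q) :
    pd s (fun x => f x - g x) q = pd s f q - pd s g q := by
  simp [pd, fderiv_fun_sub hf hg]

lemma pd_mul (hf : DifferentiableAt ℝ f q) (hg : DifferentiableAt ℝ g q) :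
    pd s (fun x => f x * g x) q = pd s f q * g q + f q * pd s g q := by
  simp [pd, fderiv_fun_mul hf hg]
  ring

lemma pd_pow_two (hf : DifferentiableAt ℝ f q) :
    pd s (fun x => f x ^ 2) q = 2 * f q * pd s f q := by
  simp [pd, fderiv_fun_pow 2 hf]

end PartialDerivative

noncomputable def jacobiator (π : (Fin 4 → ℝ) → Matrix (Fin 4) (Fin 4) ℝ)
    (q : Fin 4 → ℝ) (i j l : Fin 4) : ℝ :=
  ∑ s, (π q s l * pd s (fun x => π x i j) q + π q s i * pd s (fun x => π x j l) q +
    π q s j * pd s (fun x => π x l i) q)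

section Jacobiator

variable {π : (Fin 4 → ℝ) → Matrix (Fin 4) (Fin 4) ℝ} (q : Fin 4 → ℝ)

lemma jacobiator_cycle (i j l : Fin 4) : jacobiator π q j l i = jacobiator π q i j l :=
  Finset.sum_congr rfl fun _ _ => by ring

lemma jacobiator_swap (hπ : ∀ x i j, π x j i = -π x i j) (i j l : Fin 4) :
    jacobiator π q j i l = -jacobiator π q i j l := by
  have hpd : ∀ s a b, pd s (fun x => π x b a) q = -pd s (fun x => π x a b) q := fun s a b => by
    rw [show (fun x => π x b a) = fun x => -π x a b from funext fun x => hπ x a b, pd_neg]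
  simp only [jacobiator, hpd _ j i, hpd _ l j, hpd _ i l, ← Finset.sum_neg_distrib]
  exact Finset.sum_congr rfl fun _ _ => by ring

lemma jacobiator_self (hπ : ∀ x i j, π x j i = -π x i j) (i l : Fin 4) :
    jacobiator π q i i l = 0 := by
  linarith [jacobiator_swap q hπ i i l]

end Jacobiator

lemma lefPi_antisymm (q : Fin 4 → ℝ) (i j : Fin 4) : lefPi q j i = -lefPi q i j := by
  -- a triple of distinct indices is a rotation of an increasing one, possibly after a swap
  fin_cases i <;> fin_cases j <;> simp [lefPi] <;> ring

lemma lefPi_jacobiator_ordered (q : Fin 4 → ℝ) :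
    jacobiator lefPi q 0 1 2 = 0 ∧ jacobiator lefPi q 0 1 3 = 0 ∧
      jacobiator lefPi q 0 2 3 = 0 ∧ jacobiator lefPi q 1 2 3 = 0 := by
  refine ⟨?_, ?_, ?_, ?_⟩ <;>
  · simp only [jacobiator, Fin.sum_univ_four, lefPi, Matrix.of_apply, Matrix.cons_val',
      Matrix.cons_val_zero, Matrix.cons_val_one, Matrix.cons_val_two, Matrix.cons_val_three,
      Matrix.head_cons, Matrix.head_fin_const, Matrix.tail_cons, Matrix.empty_val',
      Matrix.cons_val_fin_one]
    simp (disch := fun_prop) only [pd_add, pd_sub, pd_neg, pd_mul, pd_pow_two, pd_apply_coord,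
      Fin.reduceEq, reduceIte]
    ring

/-- The Lefschetz-model bivector satisfies the Jacobi identity in coordinates. -/
theorem lefPi_jacobi :
    ∀ (q : Fin 4 → ℝ) (i j l : Fin 4),
      ∑ s : Fin 4,
        (lefPi q s l * pd s (fun x => lefPi x i j) q +
         lefPi q s i * pd s (fun x => lefPi x j l) q +
         lefPi q s j * pd s (fun x => lefPi x l i) q) = 0 := by
  intro q
  obtain ⟨h012, h013, h023, h123⟩ := lefPi_jacobiator_ordered q
  exact eq_zero_of_alternating_fin_four (jacobiator_cycle q) (jacobiator_swap q lefPi_antisymm)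
    (jacobiator_self q lefPi_antisymm) h012 h013 h023 h123
end

section
/- Define the bracket {g,h}(x₁,y₁,x₂,y₂) = Σ_{i<j} π^{ij} (∂ᵢg ∂ⱼh − ∂ⱼg ∂ᵢh) on smooth functions on ℝ⁴ using the coefficients π^{ij} of the bivector from the Lefschetz singularity model (with k ≡ 1). Then the functions F₁(x₁,y₁,x₂,y₂) = x₁² − y₁² + x₂² − y₂² and F₂(x₁,y₁,x₂,y₂) = 2(x₁y₁ + x₂y₂) are Casimirs: {F₁, h} = 0 and {F₂, h} = 0 for every smooth function h. -/
/-- The bracket {g,h} = Σ_{i<j} π^{ij} (∂ᵢg ∂ⱼh − ∂ⱼg ∂ᵢh). -/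
noncomputable def lefBracket (g h : (Fin 4 → ℝ) → ℝ) (q : Fin 4 → ℝ) : ℝ :=
  ∑ i : Fin 4, ∑ j : Fin 4,
    if i < j then lefPi q i j * (pd i g q * pd j h q - pd j g q * pd i h q) else 0


lemma pd_F1 (s : Fin 4) (q : Fin 4 → ℝ) :
    pd s (fun x => x 0 ^ 2 - x 1 ^ 2 + x 2 ^ 2 - x 3 ^ 2) q =
      ![2 * q 0, -(2 * q 1), 2 * q 2, -(2 * q 3)] s := by
  have h0 : HasFDerivAt (fun x : Fin 4 → ℝ => x 0) (ContinuousLinearMap.proj 0 : (Fin 4 → ℝ) →L[ℝ] ℝ) q := by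
    exact hasFDerivAt_apply 0 q
  have h1 : HasFDerivAt (fun x : Fin 4 → ℝ => x 1) (ContinuousLinearMap.proj 1 : (Fin 4 → ℝ) →L[ℝ] ℝ) q := by
    exact hasFDerivAt_apply 1 q
  have h2 : HasFDerivAt (fun x : Fin 4 → ℝ => x 2) (ContinuousLinearMap.proj 2 : (Fin 4 → ℝ) →L[ℝ] ℝ) q := by
    exact hasFDerivAt_apply 2 q
  have h3 : HasFDerivAt (fun x : Fin 4 → ℝ => x 3) (ContinuousLinearMap.proj 3 : (Fin 4 → ℝ) →L[ℝ] ℝ) q := by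
    exact hasFDerivAt_apply 3 q
  have H := (((h0.mul h0).sub (h1.mul h1)).add (h2.mul h2)).sub (h3.mul h3)
  have e : (fun x : Fin 4 → ℝ => x 0 ^ 2 - x 1 ^ 2 + x 2 ^ 2 - x 3 ^ 2)
      = fun x : Fin 4 → ℝ => x 0 * x 0 - x 1 * x 1 + x 2 * x 2 - x 3 * x 3 := by
    funext x; ring
  unfold pd
  rw [e, (show HasFDerivAt (fun x : Fin 4 → ℝ => x 0 * x 0 - x 1 * x 1 + x 2 * x 2 - x 3 * x 3) _ q from H).fderiv]
  fin_cases s <;> simp [Pi.single_apply] <;> ring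

lemma pd_F2 (s : Fin 4) (q : Fin 4 → ℝ) :
    pd s (fun x => 2 * (x 0 * x 1 + x 2 * x 3)) q =
      ![2 * q 1, 2 * q 0, 2 * q 3, 2 * q 2] s := by
  have h0 : HasFDerivAt (fun x : Fin 4 → ℝ => x 0) (ContinuousLinearMap.proj 0 : (Fin 4 → ℝ) →L[ℝ] ℝ) q := by
    exact hasFDerivAt_apply 0 q
  have h1 : HasFDerivAt (fun x : Fin 4 → ℝ => x 1) (ContinuousLinearMap.proj 1 : (Fin 4 → ℝ) →L[ℝ] ℝ) q := by
    exact hasFDerivAt_apply 1 q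
  have h2 : HasFDerivAt (fun x : Fin 4 → ℝ => x 2) (ContinuousLinearMap.proj 2 : (Fin 4 → ℝ) →L[ℝ] ℝ) q := by
    exact hasFDerivAt_apply 2 q
  have h3 : HasFDerivAt (fun x : Fin 4 → ℝ => x 3) (ContinuousLinearMap.proj 3 : (Fin 4 → ℝ) →L[ℝ] ℝ) q := by
    exact hasFDerivAt_apply 3 q
  have H := ((h0.mul h1).add (h2.mul h3)).const_mul (2 : ℝ)
  unfold pd
  rw [(show HasFDerivAt (fun x : Fin 4 → ℝ => 2 * (x 0 * x 1 + x 2 * x 3)) _ q from H).fderiv]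
  fin_cases s <;> simp [Pi.single_apply]


/-- F₁ = x₁² − y₁² + x₂² − y₂² and F₂ = 2(x₁y₁ + x₂y₂) are Casimirs of the Lefschetz-model
bracket. -/
theorem lefschetz_casimirs :
    ∀ h : (Fin 4 → ℝ) → ℝ, ContDiff ℝ (⊤ : ℕ∞) h →
      ∀ q : Fin 4 → ℝ,
        lefBracket (fun x => x 0 ^ 2 - x 1 ^ 2 + x 2 ^ 2 - x 3 ^ 2) h q = 0 ∧
        lefBracket (fun x => 2 * (x 0 * x 1 + x 2 * x 3)) h q = 0 := by
  intro h _ q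
  constructor <;>
  · unfold lefBracket
    simp only [Fin.sum_univ_four, pd_F1, pd_F2, lefPi]
    norm_num [Fin.lt_def, Fin.ext_iff, Matrix.cons_val_zero, Matrix.cons_val_one,
      show ((0:Fin 4) < 3) from by decide, show ((1:Fin 4) < 3) from by decide,
      show ((2:Fin 4) < 3) from by decide, show ¬((3:Fin 4) = 0) from by decide,
      show ¬((3:Fin 4) < 2) from by decide]
    simp only [Matrix.cons_val]
    ring
end

section
/- Let π be the bivector on ℝ⁴ from the Lefschetz singularity model (k ≡ 1), viewed pointwise as an antisymmetric 4×4 matrix B(q) acting on covectors. Then for every q ≠ 0, the matrix B(q) has rank exactly 2, and B(0) = 0. -/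
namespace Matrix

variable {K : Type*} [Field K] {m n : Type*} [Fintype n]

theorem rank_add_le (A B : Matrix m n K) : (A + B).rank ≤ A.rank + B.rank := by
  unfold rank
  rw [mulVecLin_add]
  calc Module.finrank K (LinearMap.range (A.mulVecLin + B.mulVecLin))
      ≤ Module.finrank K
        (LinearMap.range A.mulVecLin ⊔ LinearMap.range B.mulVecLin : Submodule K (m → K)) :=
        Submodule.finrank_mono (LinearMap.range_add_le _ _)
    _ ≤ _ := Submodule.finrank_add_le_finrank_add_finrank _ _

theorem rank_vecMulVec_sub_vecMulVec_le (u v : n → K) :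
    (vecMulVec v u - vecMulVec u v).rank ≤ 2 := by
  rw [sub_eq_add_neg, ← neg_vecMulVec]
  exact (rank_add_le _ _).trans (add_le_add (rank_vecMulVec_le _ _) (rank_vecMulVec_le _ _))

theorem card_le_rank_of_linearIndependent {ι : Type*} [Fintype ι] (A : Matrix m n K)
    {w : ι → m → K} (hw : LinearIndependent K w) (hrange : ∀ i, w i ∈ LinearMap.range A.mulVecLin) :
    Fintype.card ι ≤ A.rank := by
  rw [← finrank_span_eq_card hw]
  exact Submodule.finrank_mono (Submodule.span_le.2 (Set.range_subset_iff.2 hrange))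

theorem linearIndependent_pair_of_dotProduct_eq_zero {u v : n → K} (huv : u ⬝ᵥ v = 0)
    (hu : u ⬝ᵥ u ≠ 0) (hv : v ⬝ᵥ v ≠ 0) : LinearIndependent K ![u, v] := by
  rw [LinearIndependent.pair_iff]
  intro s t hst
  have hs := congrArg (u ⬝ᵥ ·) hst
  have ht := congrArg (v ⬝ᵥ ·) hst
  simp only [dotProduct_add, dotProduct_smul, dotProduct_comm v u, huv, smul_eq_mul,
    mul_zero, add_zero, zero_add, dotProduct_zero, mul_eq_zero] at hs ht
  exact ⟨hs.resolve_right hu, ht.resolve_right hv⟩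

theorem rank_vecMulVec_sub_vecMulVec_of_dotProduct_eq_zero {u v : n → K} (huv : u ⬝ᵥ v = 0)
    (hu : u ⬝ᵥ u ≠ 0) (hv : v ⬝ᵥ v ≠ 0) : (vecMulVec v u - vecMulVec u v).rank = 2 := by
  set B := vecMulVec v u - vecMulVec u v
  have hBu : B *ᵥ u = (u ⬝ᵥ u) • v := by
    simp [B, sub_mulVec, vecMulVec_mulVec, dotProduct_comm v u, huv]
  have hBv : B *ᵥ v = -(v ⬝ᵥ v) • u := by
    simp [B, sub_mulVec, vecMulVec_mulVec, huv]
  have hu_mem : u ∈ LinearMap.range B.mulVecLin := ⟨-(v ⬝ᵥ v)⁻¹ • v, by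
    rw [mulVecLin_apply, mulVec_smul, hBv, smul_smul, neg_mul_neg, inv_mul_cancel₀ hv, one_smul]⟩
  have hv_mem : v ∈ LinearMap.range B.mulVecLin := ⟨(u ⬝ᵥ u)⁻¹ • u, by
    rw [mulVecLin_apply, mulVec_smul, hBu, smul_smul, inv_mul_cancel₀ hu, one_smul]⟩
  refine le_antisymm (rank_vecMulVec_sub_vecMulVec_le u v) ?_
  simpa using card_le_rank_of_linearIndependent B
    (linearIndependent_pair_of_dotProduct_eq_zero huv hu hv)
    (Fin.forall_fin_two.2 ⟨hu_mem, hv_mem⟩)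

end Matrix

open Matrix

def lefU (q : Fin 4 → ℝ) : Fin 4 → ℝ := ![-q 3, q 2, q 1, -q 0]

def lefV (q : Fin 4 → ℝ) : Fin 4 → ℝ := ![q 2, q 3, -q 0, -q 1]

theorem lefPi_eq_vecMulVec_sub_vecMulVec (q : Fin 4 → ℝ) :
    lefPi q = vecMulVec (lefV q) (lefU q) - vecMulVec (lefU q) (lefV q) := by
  ext i j
  fin_cases i <;> fin_cases j <;> simp [lefPi, lefU, lefV, vecMulVec] <;> ring

theorem lefU_dotProduct_lefV (q : Fin 4 → ℝ) : lefU q ⬝ᵥ lefV q = 0 := by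
  simp only [lefU, lefV, dotProduct, Fin.sum_univ_four, cons_val]
  ring

theorem lefU_dotProduct_self (q : Fin 4 → ℝ) : lefU q ⬝ᵥ lefU q = q ⬝ᵥ q := by
  simp only [lefU, dotProduct, Fin.sum_univ_four, cons_val]
  ring

theorem lefV_dotProduct_self (q : Fin 4 → ℝ) : lefV q ⬝ᵥ lefV q = q ⬝ᵥ q := by
  simp only [lefV, dotProduct, Fin.sum_univ_four, cons_val]
  ring

/-- For q ≠ 0 the matrix of the Lefschetz-model bivector has rank exactly 2, and it vanishes at 0. -/
theorem lefPi_rank :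
    (∀ q : Fin 4 → ℝ, q ≠ 0 → (lefPi q).rank = 2) ∧ lefPi 0 = 0 := by
  refine ⟨fun q hq => ?_, ?_⟩
  · have hqq : q ⬝ᵥ q ≠ 0 := dotProduct_self_eq_zero.not.2 hq
    rw [lefPi_eq_vecMulVec_sub_vecMulVec]
    exact rank_vecMulVec_sub_vecMulVec_of_dotProduct_eq_zero (lefU_dotProduct_lefV q)
      (by rwa [lefU_dotProduct_self]) (by rwa [lefV_dotProduct_self])
  · simp [lefPi_eq_vecMulVec_sub_vecMulVec, lefU, lefV]
end

section
/- At a point q = (x₁,y₁,x₂,y₂) ∈ ℝ⁴ with x₁² + y₁² ≠ 0, the two vectors u_q and v_q defined by u_q = c·(−(x₁x₂+y₁y₂), −(x₁y₂−x₂y₁), x₁²+y₁², 0) and v_q = c·((x₁y₂−x₂y₁), −(x₁x₂+y₁y₂), 0, x₁²+y₁²), where c = 1/√((x₁²+y₁²)(x₁²+y₁²+x₂²+y₂²)), are orthonormal under the Euclidean inner product and are both annihilated by dF₁(q) and dF₂(q), where F₁ = x₁²−y₁²+x₂²−y₂² and F₂ = 2(x₁y₁+x₂y₂). -/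
open Real

/-!
With z₁ = x₁ + i y₁ and z₂ = x₂ + i y₂ we have F₁ + i F₂ = z₁² + z₂², whose complex differential
at q is w ↦ 2 (z₁ w₁ + z₂ w₂). The vector u/c = (−z̄₁ z₂, |z₁|²) lies in its kernel, hence so does
v/c = i · u/c, and a vector is always orthogonal to its product with i. Both have squared length
|z₁|² |z₂|² + |z₁|⁴ = |z₁|² (|z₁|² + |z₂|²) = c⁻².
-/

section

variable {𝕜 ι : Type*} [NontriviallyNormedField 𝕜] [Fintype ι]

theorem fderiv_apply_mul_apply (q w : ι → 𝕜) (i j : ι) :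
    fderiv 𝕜 (fun x : ι → 𝕜 => x i * x j) q w = q i * w j + q j * w i := by
  have h : HasFDerivAt (fun x : ι → 𝕜 => x i * x j) _ q :=
    (hasFDerivAt_apply (𝕜 := 𝕜) i q).mul (hasFDerivAt_apply (𝕜 := 𝕜) j q)
  simp only [h.fderiv, add_apply, smul_apply, ContinuousLinearMap.proj_apply, smul_eq_mul]

theorem fderiv_apply_sq (q w : ι → 𝕜) (i : ι) :
    fderiv 𝕜 (fun x : ι → 𝕜 => x i ^ 2) q w = 2 * q i * w i := by
  simp only [sq, fderiv_apply_mul_apply]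
  ring

theorem fderiv_sq_sub_sq_add_sq_sub_sq (q w : Fin 4 → 𝕜) :
    fderiv 𝕜 (fun x : Fin 4 → 𝕜 => x 0 ^ 2 - x 1 ^ 2 + x 2 ^ 2 - x 3 ^ 2) q w
      = 2 * (q 0 * w 0 - q 1 * w 1 + q 2 * w 2 - q 3 * w 3) := by
  rw [fderiv_fun_sub (by fun_prop) (by fun_prop), fderiv_fun_add (by fun_prop) (by fun_prop),
    fderiv_fun_sub (by fun_prop) (by fun_prop)]
  simp only [add_apply, sub_apply, fderiv_apply_sq]
  ring

theorem fderiv_two_mul_mul_add_mul (q w : Fin 4 → 𝕜) :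
    fderiv 𝕜 (fun x : Fin 4 → 𝕜 => 2 * (x 0 * x 1 + x 2 * x 3)) q w
      = 2 * (q 0 * w 1 + q 1 * w 0 + q 2 * w 3 + q 3 * w 2) := by
  rw [fderiv_const_mul (by fun_prop), fderiv_fun_add (by fun_prop) (by fun_prop)]
  simp only [smul_apply, add_apply, fderiv_apply_mul_apply, smul_eq_mul]
  ring

end

theorem one_div_sqrt_mul_one_div_sqrt_mul_self {s : ℝ} (hs : 0 < s) :
    1 / √s * (1 / √s) * s = 1 := by
  rw [div_mul_div_comm, one_mul, mul_self_sqrt hs.le, one_div_mul_cancel hs.ne']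

/-- At any q = (x₁,y₁,x₂,y₂) with x₁²+y₁² ≠ 0, the vectors u_q and v_q are orthonormal for the
Euclidean inner product and are annihilated by dF₁(q) and dF₂(q), with
F₁ = x₁²−y₁²+x₂²−y₂² and F₂ = 2(x₁y₁+x₂y₂). -/
theorem lefschetz_orthonormal_tangent_frame (q : Fin 4 → ℝ)
    (hq : q 0 ^ 2 + q 1 ^ 2 ≠ 0) :
    let c : ℝ := 1 / Real.sqrt ((q 0 ^ 2 + q 1 ^ 2) * (q 0 ^ 2 + q 1 ^ 2 + q 2 ^ 2 + q 3 ^ 2))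
    let u : Fin 4 → ℝ := fun i =>
      c * ![-(q 0 * q 2 + q 1 * q 3), -(q 0 * q 3 - q 2 * q 1), q 0 ^ 2 + q 1 ^ 2, 0] i
    let v : Fin 4 → ℝ := fun i =>
      c * ![q 0 * q 3 - q 2 * q 1, -(q 0 * q 2 + q 1 * q 3), 0, q 0 ^ 2 + q 1 ^ 2] i
    let F₁ : (Fin 4 → ℝ) → ℝ := fun x => x 0 ^ 2 - x 1 ^ 2 + x 2 ^ 2 - x 3 ^ 2
    let F₂ : (Fin 4 → ℝ) → ℝ := fun x => 2 * (x 0 * x 1 + x 2 * x 3)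
    (∑ i, u i * u i) = 1 ∧ (∑ i, v i * v i) = 1 ∧ (∑ i, u i * v i) = 0 ∧
    fderiv ℝ F₁ q u = 0 ∧ fderiv ℝ F₂ q u = 0 ∧
    fderiv ℝ F₁ q v = 0 ∧ fderiv ℝ F₂ q v = 0 := by
  intro c u v F₁ F₂
  have hA : 0 < q 0 ^ 2 + q 1 ^ 2 := hq.symm.lt_of_le (by positivity)
  have hc : c * c * ((q 0 ^ 2 + q 1 ^ 2) * (q 0 ^ 2 + q 1 ^ 2 + q 2 ^ 2 + q 3 ^ 2)) = 1 :=
    one_div_sqrt_mul_one_div_sqrt_mul_self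
      (mul_pos hA (by linarith [sq_nonneg (q 2), sq_nonneg (q 3)]))
  clear_value c
  simp only [u, v, F₁, F₂, fderiv_sq_sub_sq_add_sq_sub_sq, fderiv_two_mul_mul_add_mul,
    Fin.sum_univ_four, Matrix.cons_val_zero, Matrix.cons_val_one, Matrix.cons_val_two,
    Matrix.cons_val_three, Matrix.head_cons, Matrix.tail_cons]
  exact ⟨by linear_combination hc, by linear_combination hc, by ring, by ring, by ring, by ring,
    by ring⟩
end

section
/- For the bracket {g,h} μ = k dg ∧ dh ∧ dF₁ ∧ ⋯ ∧ dF_{n−2} on ℝⁿ (μ the standard volume form, k nonvanishing smooth), at any point q where dF₁(q),…,dF_{n−2}(q) are linearly independent, the associated bivector B(q): (ℝⁿ)* → ℝⁿ has rank exactly 2, and its image is the common kernel of dF₁(q),…,dF_{n−2}(q). -/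
open Module Matrix

/-- Gradient row of a function on ℝⁿ at `q` (components of its differential). -/
noncomputable def gradRow {n : ℕ} (f : (Fin n → ℝ) → ℝ) (q : Fin n → ℝ) : Fin n → ℝ :=
  fun j => fderiv ℝ f q (Pi.single j 1)

/-- The pointwise bivector π_q(α,β) determined by π_q(α,β) μ = k(q) α ∧ β ∧ dF₁(q) ∧ ⋯ ∧ dF_d(q),
where μ is the standard volume form and covectors are given by their components. -/
noncomputable def pointBivector {d : ℕ} (k : (Fin (d + 2) → ℝ) → ℝ)
    (F : Fin d → ((Fin (d + 2) → ℝ) → ℝ)) (q : Fin (d + 2) → ℝ)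
    (α β : Fin (d + 2) → ℝ) : ℝ :=
  k q * Matrix.det (Matrix.of (Fin.cons α (Fin.cons β (fun i => gradRow (F i) q))))

/-- The bundle map B(q), with ⟨β, B(q)α⟩ = π_q(β, α); its i-th component is π_q(dxⁱ, α). -/
noncomputable def bundleMap {d : ℕ} (k : (Fin (d + 2) → ℝ) → ℝ)
    (F : Fin d → ((Fin (d + 2) → ℝ) → ℝ)) (q : Fin (d + 2) → ℝ)
    (α : Fin (d + 2) → ℝ) : Fin (d + 2) → ℝ :=
  fun i => pointBivector k F q (Pi.single i 1) α

section auxLemmas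

variable {n : ℕ}

/-- Any continuous linear functional on `ℝⁿ` is given by its matrix of coefficients. -/
lemma clm_apply_eq_sum (ℓ : (Fin n → ℝ) →L[ℝ] ℝ) (v : Fin n → ℝ) :
    ℓ v = ∑ j, v j * ℓ (Pi.single j 1) := by
  have h1 : ∀ j : Fin n, (fun j' => if j = j' then (1:ℝ) else 0) = Pi.single j 1 := by
    intro j; funext j'; simp [Pi.single_apply, eq_comm]
  have := LinearMap.pi_apply_eq_sum_univ (ℓ : (Fin n → ℝ) →ₗ[ℝ] ℝ) v
  simp only [ContinuousLinearMap.coe_coe, h1, smul_eq_mul] at this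
  exact this

lemma pi_eq_sum_single (v : Fin n → ℝ) : v = ∑ j, v j • (Pi.single j 1 : Fin n → ℝ) := by
  funext j'
  simp [Finset.sum_apply, Pi.single_apply]

/-- Expansion of the determinant along one row, written via `Function.update`. -/
lemma det_update_expand (X : Fin n → (Fin n → ℝ)) (p : Fin n) (v : Fin n → ℝ) :
    Matrix.detRowAlternating (Function.update X p v)
      = ∑ j, v j * Matrix.detRowAlternating (Function.update X p (Pi.single j 1)) := by
  conv_lhs => rw [pi_eq_sum_single v]
  rw [show (Matrix.detRowAlternating (Function.update X p (∑ j, v j • (Pi.single j 1 : Fin n → ℝ))) : ℝ)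
    = Matrix.detRowAlternating.toMultilinearMap
        (Function.update X p (∑ j, v j • (Pi.single j 1 : Fin n → ℝ))) from rfl,
    MultilinearMap.map_update_sum]
  simp [AlternatingMap.map_update_smul]

lemma update_one_cons {d : ℕ} (β α' α : Fin (d+2) → ℝ) (G : Fin d → (Fin (d+2) → ℝ)) :
    Function.update (Fin.cons β (Fin.cons α' G) : Fin (d+2) → (Fin (d+2) → ℝ)) (1 : Fin (d+2)) α
      = Fin.cons β (Fin.cons α G) := by
  rw [show (1 : Fin (d+2)) = Fin.succ 0 from rfl, ← Fin.cons_update, Fin.update_cons_zero]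

end auxLemmas

/-- At a point where dF₁(q),…,dF_d(q) are linearly independent, the bundle map B(q) has rank
exactly 2 and its image is the common kernel of dF₁(q),…,dF_d(q). -/
theorem bundleMap_rank_two_and_image {d : ℕ} (k : (Fin (d + 2) → ℝ) → ℝ)
    (hk : ContDiff ℝ (⊤ : ℕ∞) k) (hk0 : ∀ q, k q ≠ 0)
    (F : Fin d → ((Fin (d + 2) → ℝ) → ℝ)) (hF : ∀ i, ContDiff ℝ (⊤ : ℕ∞) (F i))
    (q : Fin (d + 2) → ℝ)
    (hindep : LinearIndependent ℝ (fun i : Fin d => fderiv ℝ (F i) q)) :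
    Module.finrank ℝ (Submodule.span ℝ (Set.range (bundleMap k F q))) = 2 ∧
    Set.range (bundleMap k F q) = {v : Fin (d + 2) → ℝ | ∀ i, fderiv ℝ (F i) q v = 0} := by
  classical
  set G : Fin d → (Fin (d+2) → ℝ) := fun i => gradRow (F i) q with hGdef
  set A : (Fin (d+2) → ℝ) [⋀^Fin (d+2)]→ₗ[ℝ] ℝ := Matrix.detRowAlternating with hAdef
  have hB : ∀ (α : Fin (d+2) → ℝ) (i : Fin (d+2)),
      bundleMap k F q α i = k q * A (Fin.cons (Pi.single i 1) (Fin.cons α G)) := fun α i => rfl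
  have hfd : ∀ (i : Fin d) (v : Fin (d+2) → ℝ),
      fderiv ℝ (F i) q v = ∑ j, v j * G i j := fun i v => clm_apply_eq_sum _ v
  -- row-combination identity
  have hrow : ∀ (w α : Fin (d+2) → ℝ),
      k q * A (Fin.cons w (Fin.cons α G)) = ∑ i, w i * bundleMap k F q α i := by
    intro w α
    have h0 : (Fin.cons w (Fin.cons α G) : Fin (d+2) → (Fin (d+2) → ℝ))
        = Function.update (Fin.cons w (Fin.cons α G)) 0 w := by
      rw [Fin.update_cons_zero]
    rw [h0, hAdef, det_update_expand, Finset.mul_sum]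
    refine Finset.sum_congr rfl fun i _ => ?_
    rw [Fin.update_cons_zero, hB]
    ring
  -- linearity of the bundle map
  have hadd : ∀ a b, bundleMap k F q (a + b) = bundleMap k F q a + bundleMap k F q b := by
    intro a b; funext i
    simp only [Pi.add_apply, hB]
    rw [← update_one_cons (Pi.single i 1) a (a + b) G, AlternatingMap.map_update_add,
      update_one_cons, update_one_cons]
    ring
  have hsmul : ∀ (c : ℝ) a, bundleMap k F q (c • a) = c • bundleMap k F q a := by
    intro c a; funext i
    simp only [Pi.smul_apply, hB, smul_eq_mul]
    rw [← update_one_cons (Pi.single i 1) a (c • a) G, AlternatingMap.map_update_smul,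
      update_one_cons]
    simp [smul_eq_mul]; ring
  set L : (Fin (d+2) → ℝ) →ₗ[ℝ] (Fin (d+2) → ℝ) :=
    { toFun := bundleMap k F q, map_add' := hadd, map_smul' := hsmul } with hLdef
  -- image lands in common kernel
  have hrange0 : ∀ (α : Fin (d+2) → ℝ) (i : Fin d), fderiv ℝ (F i) q (bundleMap k F q α) = 0 := by
    intro α i
    rw [hfd]
    have hcomm : ∑ j, bundleMap k F q α j * G i j = ∑ j, G i j * bundleMap k F q α j := by
      simp [mul_comm]
    rw [hcomm, ← hrow]
    have heq : (Fin.cons (G i) (Fin.cons α G) : Fin (d+2) → (Fin (d+2) → ℝ)) 0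
        = (Fin.cons (G i) (Fin.cons α G) : Fin (d+2) → (Fin (d+2) → ℝ)) (Fin.succ (Fin.succ i)) := by
      simp
    rw [A.map_eq_zero_of_eq _ heq (Fin.succ_ne_zero _).symm, mul_zero]
  -- gradient rows are in the kernel of L
  have hLG : ∀ j, bundleMap k F q (G j) = 0 := by
    intro j; funext i
    rw [hB]
    have heq : (Fin.cons (Pi.single i 1) (Fin.cons (G j) G) : Fin (d+2) → (Fin (d+2) → ℝ)) 1
        = (Fin.cons (Pi.single i 1) (Fin.cons (G j) G) : Fin (d+2) → (Fin (d+2) → ℝ))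
            (Fin.succ (Fin.succ j)) := by
      rw [show (1 : Fin (d+2)) = Fin.succ 0 from rfl]
      simp
    have hne : (1 : Fin (d+2)) ≠ Fin.succ (Fin.succ j) := by
      intro h
      rw [Fin.ext_iff] at h
      simp only [Fin.val_succ, Fin.val_one] at h
      omega
    rw [A.map_eq_zero_of_eq _ heq hne, mul_zero]
    simp
  -- rows are linearly independent
  have hindep' : LinearIndependent ℝ G := by
    set T : ((Fin (d+2) → ℝ) →L[ℝ] ℝ) →ₗ[ℝ] (Fin (d+2) → ℝ) :=
      { toFun := fun ℓ => fun j => ℓ (Pi.single j 1),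
        map_add' := by intro a b; funext j; simp,
        map_smul' := by intro c a; funext j; simp } with hTdef
    have hTker : LinearMap.ker T = ⊥ := by
      rw [LinearMap.ker_eq_bot']
      intro ℓ hℓ
      ext v
      rw [clm_apply_eq_sum ℓ v]
      have : ∀ j, ℓ (Pi.single j 1) = 0 := fun j => congrFun hℓ j
      simp [this]
    have := hindep.map' T hTker
    exact this
  -- kernel of L is the span of the rows
  have hker : LinearMap.ker L = Submodule.span ℝ (Set.range G) := by
    apply le_antisymm
    · intro α hα
      by_contra hns
      have hcons : LinearIndependent ℝ (Fin.cons α G) :=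
        linearIndependent_fin_cons.mpr ⟨hindep', hns⟩
      obtain ⟨β, hβ⟩ := exists_linearIndependent_cons_of_lt_rank hcons
        (by rw [rank_fin_fun]; exact_mod_cast (by omega : d + 1 < d + 2))
      have hdet : A (Fin.cons β (Fin.cons α G)) ≠ 0 := by
        have hunit : IsUnit (Matrix.of (Fin.cons β (Fin.cons α G))
            : Matrix (Fin (d+2)) (Fin (d+2)) ℝ) :=
          Matrix.linearIndependent_rows_iff_isUnit.mp hβ
        have := (Matrix.isUnit_iff_isUnit_det _).mp hunit
        exact this.ne_zero
      have h0 : bundleMap k F q α = 0 := hα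
      have hzero := hrow β α
      rw [h0] at hzero
      simp only [Pi.zero_apply, mul_zero, Finset.sum_const_zero] at hzero
      exact hdet (by
        have := mul_eq_zero.mp hzero
        tauto)
    · rw [Submodule.span_le]
      rintro _ ⟨j, rfl⟩
      exact LinearMap.mem_ker.mpr (hLG j)
  have hn : finrank ℝ (Fin (d+2) → ℝ) = d + 2 := Module.finrank_fin_fun ℝ
  have hkerd : finrank ℝ (LinearMap.ker L) = d := by
    rw [hker, finrank_span_eq_card hindep', Fintype.card_fin]
  have hrank2 : finrank ℝ (LinearMap.range L) = 2 := by
    have h := LinearMap.finrank_range_add_finrank_ker L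
    rw [hn, hkerd] at h
    omega
  -- the common kernel as a submodule
  set Ksub : Submodule ℝ (Fin (d+2) → ℝ) :=
    ⨅ i : Fin d, LinearMap.ker ((fderiv ℝ (F i) q : (Fin (d+2) → ℝ) →L[ℝ] ℝ)
      : (Fin (d+2) → ℝ) →ₗ[ℝ] ℝ) with hKdef
  have hmemK : ∀ v, v ∈ Ksub ↔ ∀ i, fderiv ℝ (F i) q v = 0 := by
    intro v
    simp [hKdef, Submodule.mem_iInf, LinearMap.mem_ker]
  have hle : LinearMap.range L ≤ Ksub := by
    rintro _ ⟨α, rfl⟩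
    exact (hmemK _).mpr (hrange0 α)
  -- disjointness of the common kernel and the span of the rows
  have hdisj : Ksub ⊓ Submodule.span ℝ (Set.range G) = ⊥ := by
    rw [eq_bot_iff]
    rintro v ⟨hv1, hv2⟩
    obtain ⟨c, hc⟩ := (Submodule.mem_span_range_iff_exists_fun ℝ).mp hv2
    have hsq : ∑ j, v j * v j = 0 := by
      have hvj : ∀ j, v j = ∑ i, c i * G i j := by
        intro j
        rw [← hc]
        simp [Finset.sum_apply]
      calc ∑ j, v j * v j = ∑ j, v j * (∑ i, c i * G i j) := by
              refine Finset.sum_congr rfl fun j _ => ?_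
              rw [← hvj j]
        _ = ∑ j, ∑ i, v j * (c i * G i j) := by simp_rw [Finset.mul_sum]
        _ = ∑ i, ∑ j, v j * (c i * G i j) := Finset.sum_comm
        _ = ∑ i, c i * ∑ j, v j * G i j := by
              refine Finset.sum_congr rfl fun i _ => ?_
              rw [Finset.mul_sum]
              refine Finset.sum_congr rfl fun j _ => ?_
              ring
        _ = ∑ i, c i * fderiv ℝ (F i) q v := by
              refine Finset.sum_congr rfl fun i _ => ?_
              rw [hfd]
        _ = 0 := by
              simp [(hmemK v).mp hv1]
    rw [Submodule.mem_bot]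
    funext j
    have := (Finset.sum_eq_zero_iff_of_nonneg
      (fun j _ => mul_self_nonneg (v j))).mp hsq j (Finset.mem_univ j)
    exact mul_self_eq_zero.mp this
  have hKle2 : finrank ℝ Ksub ≤ 2 := by
    have h1 := Submodule.finrank_sup_add_finrank_inf_eq Ksub (Submodule.span ℝ (Set.range G))
    rw [hdisj, finrank_bot] at h1
    have h2 : finrank ℝ ↥(Ksub ⊔ Submodule.span ℝ (Set.range G)) ≤ d + 2 := by
      calc finrank ℝ ↥(Ksub ⊔ Submodule.span ℝ (Set.range G))
          ≤ finrank ℝ (Fin (d+2) → ℝ) := Submodule.finrank_le _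
        _ = d + 2 := hn
    have h3 : finrank ℝ (Submodule.span ℝ (Set.range G)) = d := by
      rw [finrank_span_eq_card hindep', Fintype.card_fin]
    omega
  have heqK : LinearMap.range L = Ksub :=
    Submodule.eq_of_le_of_finrank_le hle (by omega)
  have hset : Set.range (bundleMap k F q) = (LinearMap.range L : Set (Fin (d+2) → ℝ)) := by
    rw [LinearMap.coe_range]
    rfl
  constructor
  · rw [hset, Submodule.span_eq, hrank2]
  · rw [hset, heqK]
    ext v
    exact hmemK v
end
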